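/- For the radial function u_{σ,θ,d}(x) = u_{σ,θ}(|x|₂), the p-Laplacian vector field satisfies A(∇u_{σ,θ,d})(x) = |∇u_{σ,θ,d}(x)|₂^{p−2} ∇u_{σ,θ,d}(x) = v_{(p−1)σ,θ}(|x|₂) · x/|x|₂ = ∇u_{(p−1)σ,θ,d}(x) for all x ∈ ℝ^d. -/

import Mathlib

open MeasureTheory Real Set

noncomputable def zetaR (θ : ℝ) : ℝ := ∑' n : ℕ, ((n : ℝ) + 1) ^ (-θ)

noncomputable def aSeq (θ : ℝ) (n : ℕ) : ℝ :=
  4 * ∑ j ∈ Finset.Icc 1 (n - 1), (j : ℝ) ^ (-θ)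

noncomputable def wPiece (σ θ : ℝ) (n : ℕ) (ξ : ℝ) : ℝ :=
  if ξ < aSeq θ n + (n : ℝ) ^ (-θ) then (ξ - aSeq θ n) ^ σ
  else if ξ < aSeq θ n + 2 * (n : ℝ) ^ (-θ) then (n : ℝ) ^ (-(θ * σ))
  else if ξ < aSeq θ n + 3 * (n : ℝ) ^ (-θ) then (aSeq θ n + 3 * (n : ℝ) ^ (-θ) - ξ) ^ σ
  else 0

open Classical in
noncomputable def wFn (σ θ : ℝ) (ξ : ℝ) : ℝ :=
  if h : ∃ n : ℕ, 2 ≤ n ∧ aSeq θ n ≤ ξ ∧ ξ < aSeq θ (n + 1) then wPiece σ θ h.choose ξ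
  else 0
noncomputable def vFn (σ θ : ℝ) (r : ℝ) : ℝ :=
  wFn σ θ (16 * zetaR θ * r - 4 * zetaR θ) - wFn σ θ (16 * zetaR θ * r - 8 * zetaR θ)

noncomputable def uFn (σ θ : ℝ) (r : ℝ) : ℝ := ∫ ξ in (0 : ℝ)..r, vFn σ θ ξ

/-!
Every branch of `wPiece` is a `σ`-th power, so `wFn (γ * σ) = (wFn σ) ^ γ`; the two translates
of `wFn` making up `vFn` have disjoint supports, whence `v_{γσ} = |v_σ| ^ (γ - 1) * v_σ`.
The profile `wFn 1` is a train of trapezoids of heights `n ^ (-θ)` accumulating only at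
`4 * zetaR θ`, so it is continuous, and so is `wFn σ = (wFn 1) ^ σ`. Hence `u' = v`, and the
chain rule gives `∇u(‖x‖) = v(‖x‖) x / ‖x‖` for `x ≠ 0`, while `u` vanishes near `0`.
Then `|∇u| ^ (p - 2) ∇u = (|v| ^ (p - 2) v)(‖x‖) x / ‖x‖ = v_{(p-1)σ}(‖x‖) x / ‖x‖`.
-/

open Filter Topology

theorem hasGradientAt_comp_norm {E : Type*} [NormedAddCommGroup E] [InnerProductSpace ℝ E]
    [CompleteSpace E] {u : ℝ → ℝ} {c : ℝ} {x : E} (hx : x ≠ 0) (hu : HasDerivAt u c ‖x‖) :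
    HasGradientAt (fun y : E => u ‖y‖) ((c / ‖x‖) • x) x := by
  have hnorm : HasFDerivAt (fun y : E => √(‖y‖ ^ 2))
      ((1 / (2 * √(‖x‖ ^ 2))) • 2 • innerSL ℝ x) x :=
    (hasStrictFDerivAt_norm_sq x).hasFDerivAt.sqrt (by positivity)
  simp only [Real.sqrt_sq (norm_nonneg _)] at hnorm
  rw [hasGradientAt_iff_hasFDerivAt]
  refine (hu.comp_hasFDerivAt x hnorm).congr_fderiv (ContinuousLinearMap.ext fun y => ?_)
  have : ‖x‖ ≠ 0 := norm_ne_zero_iff.2 hx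
  simp only [one_div, mul_inv_rev, smul_apply, coe_innerSL_apply,
    nsmul_eq_mul, Nat.cast_ofNat, smul_eq_mul, map_smul, InnerProductSpace.toDual_apply_apply]
  field_simp

theorem norm_rpow_smul_smul_div_norm {E : Type*} [NormedAddCommGroup E] [NormedSpace ℝ E]
    (p c : ℝ) (x : E) :
    ‖(c / ‖x‖) • x‖ ^ (p - 2) • (c / ‖x‖) • x = (|c| ^ (p - 2) * c / ‖x‖) • x := by
  rcases eq_or_ne x 0 with rfl | hx
  · simp
  have : ‖x‖ ≠ 0 := norm_ne_zero_iff.2 hx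
  rw [norm_smul, Real.norm_eq_abs, abs_div, abs_norm, div_mul_cancel₀ _ this, smul_smul,
    mul_div_assoc]

theorem abs_rpow_sub_one_mul_self {a q : ℝ} (ha : 0 ≤ a) (hq : 0 < q) :
    |a| ^ (q - 1) * a = a ^ q := by
  rcases ha.eq_or_lt with rfl | ha
  · simp [Real.zero_rpow hq.ne']
  · rw [abs_of_pos ha, Real.rpow_sub_one ha.ne', div_mul_cancel₀ _ ha.ne']

theorem abs_rpow_sub_one_mul_sub {a b q : ℝ} (ha : 0 ≤ a) (hb : 0 ≤ b) (hq : 0 < q)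
    (hab : a = 0 ∨ b = 0) : |a - b| ^ (q - 1) * (a - b) = a ^ q - b ^ q := by
  rcases hab with rfl | rfl
  · rw [zero_sub, abs_neg, mul_neg, abs_rpow_sub_one_mul_self hb hq, Real.zero_rpow hq.ne',
      zero_sub]
  · rw [sub_zero, abs_rpow_sub_one_mul_self ha hq, Real.zero_rpow hq.ne', sub_zero]

section Sequence

variable {θ : ℝ}

theorem hasSum_zetaR (hθ : 1 < θ) : HasSum (fun n : ℕ => ((n : ℝ) + 1) ^ (-θ)) (zetaR θ) := by
  have : Summable (fun n : ℕ => (n : ℝ) ^ (-θ)) := Real.summable_nat_rpow.2 (by linarith)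
  have := ((summable_nat_add_iff 1).2 this).hasSum
  push_cast at this
  exact this

theorem zetaR_nonneg : 0 ≤ zetaR θ :=
  tsum_nonneg fun _ => Real.rpow_nonneg (by positivity) _

theorem aSeq_monotone : Monotone (aSeq θ) := fun m n hmn =>
  mul_le_mul_of_nonneg_left (Finset.sum_le_sum_of_subset_of_nonneg
    (Finset.Icc_subset_Icc_right (by omega)) fun _ _ _ => Real.rpow_nonneg (by positivity) _)
    (by norm_num)

theorem aSeq_two : aSeq θ 2 = 4 := by simp [aSeq]

theorem aSeq_succ {n : ℕ} (hn : 1 ≤ n) : aSeq θ (n + 1) = aSeq θ n + 4 * (n : ℝ) ^ (-θ) := by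
  obtain ⟨m, rfl⟩ := Nat.exists_eq_add_of_le' hn
  simp only [aSeq, Nat.add_sub_cancel]
  rw [Finset.sum_Icc_succ_top (by omega)]
  ring

theorem tendsto_aSeq (hθ : 1 < θ) : Tendsto (aSeq θ) atTop (𝓝 (4 * zetaR θ)) := by
  refine (tendsto_add_atTop_iff_nat 1).1 (((hasSum_zetaR hθ).tendsto_sum_nat.const_mul 4).congr
    fun n => ?_)
  rw [aSeq, Nat.add_sub_cancel, ← Finset.Ico_add_one_right_eq_Icc, Finset.sum_Ico_eq_sum_range]
  push_cast
  simp only [add_comm (1 : ℝ)]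

theorem aSeq_le (hθ : 1 < θ) (n : ℕ) : aSeq θ n ≤ 4 * zetaR θ :=
  aSeq_monotone.ge_of_tendsto (tendsto_aSeq hθ) n

theorem exists_aSeq_le_lt (hθ : 1 < θ) {k : ℕ} {ξ : ℝ} (hk : aSeq θ k ≤ ξ)
    (hξ : ξ < 4 * zetaR θ) : ∃ n, k ≤ n ∧ aSeq θ n ≤ ξ ∧ ξ < aSeq θ (n + 1) := by
  classical
  have hex : ∃ n, ξ < aSeq θ n := ((tendsto_aSeq hθ).eventually (lt_mem_nhds hξ)).exists
  have hkn : k < Nat.find hex := by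
    by_contra! h
    exact (Nat.find_spec hex).not_ge ((aSeq_monotone h).trans hk)
  obtain ⟨n, hn⟩ := Nat.exists_eq_add_of_lt hkn
  refine ⟨k + n, by omega, not_lt.1 (Nat.find_min hex (by omega)), ?_⟩
  simpa [hn] using Nat.find_spec hex

end Sequence

section Profile

variable {σ θ ξ : ℝ}

theorem wFn_eq_wPiece {n : ℕ} (hn : 2 ≤ n) (h₁ : aSeq θ n ≤ ξ) (h₂ : ξ < aSeq θ (n + 1)) :
    wFn σ θ ξ = wPiece σ θ n ξ := by
  have hex : ∃ n : ℕ, 2 ≤ n ∧ aSeq θ n ≤ ξ ∧ ξ < aSeq θ (n + 1) := ⟨n, hn, h₁, h₂⟩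
  obtain ⟨-, hm₁, hm₂⟩ := hex.choose_spec
  rw [wFn, dif_pos hex]
  congr
  by_contra! hne
  rcases hne.lt_or_gt with h | h <;> linarith [aSeq_monotone (θ := θ) (Nat.succ_le_of_lt h)]

theorem wFn_eq_zero_of_lt_four (h : ξ < 4) : wFn σ θ ξ = 0 := by
  rw [wFn, dif_neg]
  rintro ⟨n, hn, h₁, -⟩
  linarith [aSeq_monotone (θ := θ) hn, aSeq_two (θ := θ)]

theorem wFn_eq_zero_of_le (hθ : 1 < θ) (h : 4 * zetaR θ ≤ ξ) : wFn σ θ ξ = 0 := by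
  rw [wFn, dif_neg]
  rintro ⟨n, -, -, h₂⟩
  linarith [aSeq_le hθ (n + 1)]

theorem wFn_eq_zero_of_mem_gap {m : ℕ} (hm : 1 ≤ m) (h₁ : aSeq θ m + 3 * (m : ℝ) ^ (-θ) ≤ ξ)
    (h₂ : ξ < aSeq θ (m + 1)) : wFn σ θ ξ = 0 := by
  rcases hm.eq_or_lt with rfl | hm
  · exact wFn_eq_zero_of_lt_four (by simpa [aSeq_two] using h₂)
  have ht : 0 ≤ (m : ℝ) ^ (-θ) := Real.rpow_nonneg (Nat.cast_nonneg m) _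
  rw [wFn_eq_wPiece hm (by linarith) h₂, wPiece, if_neg (by linarith), if_neg (by linarith),
    if_neg (by linarith)]

theorem wPiece_nonneg {n : ℕ} (h : aSeq θ n ≤ ξ) : 0 ≤ wPiece σ θ n ξ := by
  unfold wPiece
  split_ifs <;> first | exact le_rfl | exact Real.rpow_nonneg (by linarith) _

theorem wFn_nonneg : 0 ≤ wFn σ θ ξ := by
  unfold wFn
  split_ifs with h
  · exact wPiece_nonneg h.choose_spec.2.1
  · exact le_rfl

theorem wFn_mul_rpow {γ : ℝ} (hγ : 0 < γ) : wFn (γ * σ) θ ξ = wFn σ θ ξ ^ γ := by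
  unfold wFn
  split_ifs with h
  · obtain ⟨-, h₁, -⟩ := h.choose_spec
    unfold wPiece
    split_ifs
    · rw [mul_comm γ, Real.rpow_mul (by linarith)]
    · rw [← Real.rpow_mul (Nat.cast_nonneg _)]
      ring_nf
    · rw [mul_comm γ, Real.rpow_mul (by linarith)]
    · rw [Real.zero_rpow hγ.ne']
  · rw [Real.zero_rpow hγ.ne']

theorem mem_Ico_of_wFn_ne_zero (hθ : 1 < θ) (h : wFn σ θ ξ ≠ 0) :
    ξ ∈ Ico 4 (4 * zetaR θ) := by
  by_contra! hc
  rw [mem_Ico, not_and, not_lt] at hc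
  rcases lt_or_ge ξ 4 with h4 | h4
  · exact h (wFn_eq_zero_of_lt_four h4)
  · exact h (wFn_eq_zero_of_le hθ (hc h4))

noncomputable def tent (θ : ℝ) (n : ℕ) (ξ : ℝ) : ℝ :=
  max 0 (min (min (ξ - aSeq θ n) ((n : ℝ) ^ (-θ))) (aSeq θ n + 3 * (n : ℝ) ^ (-θ) - ξ))

theorem continuous_tent (n : ℕ) : Continuous (tent θ n) := by
  unfold tent; fun_prop

theorem tent_le (n : ℕ) : tent θ n ξ ≤ (n : ℝ) ^ (-θ) :=
  max_le (Real.rpow_nonneg (Nat.cast_nonneg n) _) ((min_le_left _ _).trans (min_le_right _ _))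

theorem tent_eq_zero_of_le {n : ℕ} (h : ξ ≤ aSeq θ n) : tent θ n ξ = 0 :=
  max_eq_left ((min_le_left _ _).trans ((min_le_left _ _).trans (by linarith)))

theorem wPiece_one {n : ℕ} (h : aSeq θ n ≤ ξ) : wPiece 1 θ n ξ = tent θ n ξ := by
  have ht : 0 ≤ (n : ℝ) ^ (-θ) := Real.rpow_nonneg (Nat.cast_nonneg n) _
  simp only [wPiece, tent, Real.rpow_one, mul_one, min_def, max_def]
  split_ifs <;> linarith

theorem wFn_one_le (hθ : 1 < θ) {N : ℕ} (hN : 2 ≤ N) (h : aSeq θ N ≤ ξ) :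
    wFn 1 θ ξ ≤ (N : ℝ) ^ (-θ) := by
  rcases lt_or_ge ξ (4 * zetaR θ) with hξ | hξ
  · obtain ⟨n, hNn, h₁, h₂⟩ := exists_aSeq_le_lt hθ h hξ
    rw [wFn_eq_wPiece (hN.trans hNn) h₁ h₂, wPiece_one h₁]
    exact (tent_le n).trans (Real.rpow_le_rpow_of_nonpos (by positivity) (by exact_mod_cast hNn)
      (by linarith))
  · rw [wFn_eq_zero_of_le hθ hξ]
    exact Real.rpow_nonneg (Nat.cast_nonneg N) _

theorem wFn_one_eventuallyEq_tent (hθ : 1 < θ) (h₄ : 4 ≤ ξ) (hξ : ξ < 4 * zetaR θ) :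
    ∃ n, wFn 1 θ =ᶠ[𝓝 ξ] tent θ n := by
  obtain ⟨n, hn, h₁, h₂⟩ := exists_aSeq_le_lt hθ (aSeq_two.trans_le h₄) hξ
  obtain ⟨m, rfl⟩ := Nat.exists_eq_add_of_le' (by omega : 1 ≤ n)
  have hgap : aSeq θ m + 3 * (m : ℝ) ^ (-θ) < aSeq θ (m + 1) := by
    have : 0 < (m : ℝ) ^ (-θ) := Real.rpow_pos_of_pos (by exact_mod_cast (by omega : 0 < m)) _
    linarith [aSeq_succ (θ := θ) (by omega : 1 ≤ m)]
  refine ⟨m + 1, eventually_of_mem (Ioo_mem_nhds (hgap.trans_le h₁) h₂) fun ζ hζ => ?_⟩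
  rcases lt_or_ge ζ (aSeq θ (m + 1)) with hlt | hge
  · rw [wFn_eq_zero_of_mem_gap (by omega) hζ.1.le hlt, tent_eq_zero_of_le hlt.le]
  · rw [wFn_eq_wPiece hn hge hζ.2, wPiece_one hge]

theorem tendsto_wFn_one (hθ : 1 < θ) : Tendsto (wFn 1 θ) (𝓝 (4 * zetaR θ)) (𝓝 0) := by
  refine tendsto_order.2 ⟨fun b hb => Eventually.of_forall fun _ => hb.trans_le wFn_nonneg,
    fun b hb => ?_⟩
  have ht : Tendsto (fun n : ℕ => (n : ℝ) ^ (-θ)) atTop (𝓝 0) :=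
    (tendsto_rpow_neg_atTop (by linarith)).comp tendsto_natCast_atTop_atTop
  obtain ⟨N, hNb, hN⟩ := ((ht.eventually (gt_mem_nhds hb)).and (eventually_ge_atTop 2)).exists
  have haN : aSeq θ N < 4 * zetaR θ := by
    have : 0 < (N : ℝ) ^ (-θ) := Real.rpow_pos_of_pos (by exact_mod_cast (by omega : 0 < N)) _
    linarith [aSeq_succ (θ := θ) (by omega : 1 ≤ N), aSeq_le hθ (N + 1)]
  exact eventually_of_mem (Ioi_mem_nhds haN) fun ζ hζ => (wFn_one_le hθ hN hζ.le).trans_lt hNb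

theorem continuous_wFn_one (hθ : 1 < θ) : Continuous (wFn 1 θ) := by
  refine continuous_iff_continuousAt.2 fun ξ => ?_
  rcases lt_or_ge ξ 4 with h₄ | h₄
  · exact continuousAt_const.congr
      (eventually_of_mem (Iio_mem_nhds h₄) fun ζ hζ => (wFn_eq_zero_of_lt_four hζ).symm)
  rcases lt_trichotomy ξ (4 * zetaR θ) with hξ | rfl | hξ
  · obtain ⟨n, hn⟩ := wFn_one_eventuallyEq_tent hθ h₄ hξ
    exact (continuous_tent n).continuousAt.congr hn.symm
  · rw [ContinuousAt, wFn_eq_zero_of_le hθ le_rfl]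
    exact tendsto_wFn_one hθ
  · exact continuousAt_const.congr
      (eventually_of_mem (Ioi_mem_nhds hξ) fun ζ hζ => (wFn_eq_zero_of_le hθ hζ.le).symm)

theorem continuous_wFn (hσ : 0 < σ) (hθ : 1 < θ) : Continuous (wFn σ θ) := by
  have : wFn σ θ = fun ξ => wFn 1 θ ξ ^ σ := funext fun ξ => by
    rw [← wFn_mul_rpow hσ, mul_one]
  rw [this]
  exact (Real.continuous_rpow_const hσ.le).comp (continuous_wFn_one hθ)

theorem continuous_vFn (hσ : 0 < σ) (hθ : 1 < θ) : Continuous (vFn σ θ) :=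
  ((continuous_wFn hσ hθ).comp (by fun_prop)).sub ((continuous_wFn hσ hθ).comp (by fun_prop))

theorem vFn_eq_zero_of_le {r : ℝ} (h : r ≤ 1 / 4) : vFn σ θ r = 0 := by
  have hζ := zetaR_nonneg (θ := θ)
  rw [vFn, wFn_eq_zero_of_lt_four (by nlinarith), wFn_eq_zero_of_lt_four (by nlinarith), sub_zero]

/-- The two terms of `vFn` have disjoint supports, since the support of `wFn` has length less
than the shift `4 * zetaR θ` between them. -/
theorem vFn_mul_rpow (hθ : 1 < θ) {γ : ℝ} (hγ : 0 < γ) (r : ℝ) :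
    vFn (γ * σ) θ r = |vFn σ θ r| ^ (γ - 1) * vFn σ θ r := by
  have hdisj : wFn σ θ (16 * zetaR θ * r - 4 * zetaR θ) = 0 ∨
      wFn σ θ (16 * zetaR θ * r - 8 * zetaR θ) = 0 := by
    by_contra! h
    have h₁ := mem_Ico_of_wFn_ne_zero hθ h.1
    have h₂ := mem_Ico_of_wFn_ne_zero hθ h.2
    linarith [h₁.2, h₂.1]
  rw [vFn, vFn, wFn_mul_rpow hγ, wFn_mul_rpow hγ,
    abs_rpow_sub_one_mul_sub wFn_nonneg wFn_nonneg hγ hdisj]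

theorem hasDerivAt_uFn (hσ : 0 < σ) (hθ : 1 < θ) (r : ℝ) :
    HasDerivAt (uFn σ θ) (vFn σ θ r) r :=
  ((continuous_vFn hσ hθ).integral_hasStrictDerivAt 0 r).hasDerivAt

theorem uFn_eq_zero_of_le {r : ℝ} (h₀ : 0 ≤ r) (h : r ≤ 1 / 4) : uFn σ θ r = 0 := by
  rw [uFn, intervalIntegral.integral_congr (g := fun _ => 0), intervalIntegral.integral_zero]
  intro ξ hξ
  rw [uIcc_of_le h₀] at hξ
  exact vFn_eq_zero_of_le (hξ.2.trans h)

theorem gradient_uFn_comp_norm {E : Type*} [NormedAddCommGroup E] [InnerProductSpace ℝ E]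
    [CompleteSpace E] (hσ : 0 < σ) (hθ : 1 < θ) (x : E) :
    gradient (fun y : E => uFn σ θ ‖y‖) x = (vFn σ θ ‖x‖ / ‖x‖) • x := by
  rcases eq_or_ne x 0 with rfl | hx
  · have : (fun y : E => uFn σ θ ‖y‖) =ᶠ[𝓝 0] fun _ => 0 :=
      eventually_of_mem (Metric.ball_mem_nhds 0 (by norm_num : (0 : ℝ) < 1 / 4)) fun y hy =>
        uFn_eq_zero_of_le (norm_nonneg y) (mem_ball_zero_iff.1 hy).le
    rw [this.gradient_eq, gradient_fun_const, smul_zero]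
  · exact (hasGradientAt_comp_norm hx (hasDerivAt_uFn hσ hθ ‖x‖)).gradient

end Profile

theorem stmt17_general (d : ℕ) (p σ θ : ℝ) (hp : 1 < p) (hσ : 0 < σ) (hθ : 1 < θ) :
    ∀ x : EuclideanSpace ℝ (Fin d),
      ‖gradient (fun y : EuclideanSpace ℝ (Fin d) => uFn σ θ ‖y‖) x‖ ^ (p - 2) •
          gradient (fun y : EuclideanSpace ℝ (Fin d) => uFn σ θ ‖y‖) x =
        (vFn ((p - 1) * σ) θ ‖x‖ / ‖x‖) • x ∧
      ‖gradient (fun y : EuclideanSpace ℝ (Fin d) => uFn σ θ ‖y‖) x‖ ^ (p - 2) •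
          gradient (fun y : EuclideanSpace ℝ (Fin d) => uFn σ θ ‖y‖) x =
        gradient (fun y : EuclideanSpace ℝ (Fin d) => uFn ((p - 1) * σ) θ ‖y‖) x := by
  intro x
  have hp₁ : 0 < p - 1 := by linarith
  rw [gradient_uFn_comp_norm (mul_pos hp₁ hσ) hθ, and_self, gradient_uFn_comp_norm hσ hθ,
    norm_rpow_smul_smul_div_norm, vFn_mul_rpow hθ hp₁, show p - 1 - 1 = p - 2 by ring]

/-- For the radial function u_{σ,θ,d}(x) = u_{σ,θ}(|x|₂) the p-Laplacian vector field
satisfies A(∇u_{σ,θ,d})(x) = |∇u_{σ,θ,d}(x)|^{p−2} ∇u_{σ,θ,d}(x)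
= v_{(p−1)σ,θ}(|x|₂)·x/|x|₂ = ∇u_{(p−1)σ,θ,d}(x) for all x ∈ ℝ^d. -/
theorem stmt17 (d : ℕ) (hd : 1 ≤ d) (p σ θ : ℝ) (hp : 1 < p) (hσ : 0 < σ) (hθ : 1 < θ) :
    ∀ x : EuclideanSpace ℝ (Fin d),
      ‖gradient (fun y : EuclideanSpace ℝ (Fin d) => uFn σ θ ‖y‖) x‖ ^ (p - 2) •
          gradient (fun y : EuclideanSpace ℝ (Fin d) => uFn σ θ ‖y‖) x =
        (vFn ((p - 1) * σ) θ ‖x‖ / ‖x‖) • x ∧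
      ‖gradient (fun y : EuclideanSpace ℝ (Fin d) => uFn σ θ ‖y‖) x‖ ^ (p - 2) •
          gradient (fun y : EuclideanSpace ℝ (Fin d) => uFn σ θ ‖y‖) x =
        gradient (fun y : EuclideanSpace ℝ (Fin d) => uFn ((p - 1) * σ) θ ‖y‖) x :=
  stmt17_general d p σ θ hp hσ hθ
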